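/- arXiv:math/0608235 — 5 statements merged into one kernel-verified Lean document; each statement's English description precedes it below -/
import Mathlib

section
/- For variables x_1,…,x_m and y_1,…,y_n and any r ≥ 0, one has e_r(y_1,…,y_n) = ∑_{s=0}^{r} (-1)^s h_s(x_1,…,x_m) e_{r-s}(x_1,…,x_m,y_1,…,y_n). -/
open Finset

/-- The `r`-th elementary symmetric polynomial evaluated at the family `x`. -/
def esymF {R : Type*} [CommRing R] {σ : Type*} [Fintype σ] [DecidableEq σ]
    (x : σ → R) (r : ℕ) : R :=
  ∑ A ∈ Finset.powersetCard r (Finset.univ : Finset σ), ∏ i ∈ A, x i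

/-- The `r`-th complete homogeneous symmetric polynomial evaluated at the family `x`. -/
def hsymF {R : Type*} [CommRing R] {σ : Type*} [Fintype σ] [DecidableEq σ]
    (x : σ → R) (r : ℕ) : R :=
  ∑ m ∈ (Finset.univ : Finset σ).sym r, ((m : Multiset σ).map x).prod

/-!
With `E_x(t) = ∏ (1 + xᵢ t)` and `H_x(t) = ∏ (1 - xᵢ t)⁻¹` the generating functions of the
`e_r(x)` and `h_r(x)`, one has `H_x(-t) E_x(t) = 1` and `E_{x,y}(t) = E_x(t) E_y(t)`, hence
`E_y(t) = H_x(-t) E_{x,y}(t)`; the identity is the coefficient of `t^r` on both sides.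
-/

theorem Multiset.prod_map_eq_prod_pow_count {σ M : Type*} [Fintype σ] [DecidableEq σ]
    [CommMonoid M] (s : Multiset σ) (x : σ → M) :
    (s.map x).prod = ∏ i, x i ^ s.count i := by
  rw [Finset.prod_multiset_map_count]
  refine prod_subset (subset_univ _) fun i _ hi => ?_
  rw [Multiset.count_eq_zero.mpr (by simpa using hi), pow_zero]

namespace PowerSeries

theorem rescale_C {R : Type*} [CommSemiring R] (a b : R) : rescale a (C b) = C b := by
  ext n
  rw [coeff_rescale, coeff_C]
  split_ifs with h <;> simp [h]

variable {R : Type*} [CommRing R]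

theorem mk_pow_mul_one_sub_C_mul_X (a : R) :
    mk (a ^ ·) * (1 - C a * X) = 1 := by
  simpa [rescale_mk, rescale_X] using congrArg (rescale a) (mk_one_mul_one_sub_eq_one R)

variable {σ : Type*} [Fintype σ] [DecidableEq σ]

theorem coeff_prod_one_add_C_mul_X (x : σ → R) (k : ℕ) :
    coeff k (∏ i, (1 + C (x i) * X)) = esymF x k := by
  simp_rw [add_comm (1 : R⟦X⟧), prod_add, prod_const_one, mul_one, map_sum, prod_mul_distrib,
    ← map_prod, prod_const, coeff_C_mul_X_pow, esymF, powersetCard_eq_filter, sum_filter, eq_comm]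

theorem mk_hsymF (x : σ → R) : mk (hsymF x) = ∏ i, mk (x i ^ ·) := by
  ext d
  rw [coeff_mk, coeff_prod, hsymF, sym_univ]
  simp only [coeff_mk]
  have hmem (P : σ →₀ ℕ) : P ∈ finsuppAntidiag univ d ↔ P.sum (fun _ => id) = d := by
    simp [mem_finsuppAntidiag, Finsupp.sum_fintype]
  let _ := Fintype.subtype _ hmem
  rw [sum_subtype _ hmem]
  exact Fintype.sum_equiv (Sym.equivNatSum σ d) _ _
    fun s => Multiset.prod_map_eq_prod_pow_count _ _

theorem mk_hsymF_mul_prod_one_sub_C_mul_X (x : σ → R) :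
    mk (hsymF x) * ∏ i, (1 - C (x i) * X) = 1 := by
  rw [mk_hsymF, ← prod_mul_distrib]
  exact prod_eq_one fun i _ => mk_pow_mul_one_sub_C_mul_X (x i)

theorem mk_neg_one_pow_mul_hsymF_mul_prod_one_add_C_mul_X (x : σ → R) :
    mk (fun s => (-1) ^ s * hsymF x s) * ∏ i, (1 + C (x i) * X) = 1 := by
  simpa [rescale_mk, map_prod, rescale_X, rescale_C, sub_eq_add_neg] using
    congrArg (rescale (-1)) (mk_hsymF_mul_prod_one_sub_C_mul_X x)

end PowerSeries

open PowerSeries in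
/-- `e_r(y_1,…,y_n) = ∑_{s=0}^{r} (-1)^s h_s(x_1,…,x_m) e_{r-s}(x_1,…,x_m,y_1,…,y_n)`. -/
theorem esymm_eq_alternating_sum_hsymm_esymm_union {R : Type*} [CommRing R] (m n : ℕ)
    (x : Fin m → R) (y : Fin n → R) (r : ℕ) :
    esymF y r =
      ∑ s ∈ Finset.range (r + 1),
        (-1 : R) ^ s * hsymF x s * esymF (Sum.elim x y) (r - s) := by
  have hgen : ∏ j, (1 + C (y j) * X) = mk (fun s => (-1) ^ s * hsymF x s) *
      ∏ i : Fin m ⊕ Fin n, (1 + C (Sum.elim x y i) * X) := by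
    simp only [Fintype.prod_sum_type, Sum.elim_inl, Sum.elim_inr]
    rw [← mul_assoc, mk_neg_one_pow_mul_hsymF_mul_prod_one_add_C_mul_X, one_mul]
  rw [← coeff_prod_one_add_C_mul_X, hgen, coeff_mul,
    Nat.sum_antidiagonal_eq_sum_range_succ (fun i j => coeff i (mk _) * coeff j _)]
  simp only [coeff_mk, coeff_prod_one_add_C_mul_X]
end

section
/- Let x_1,…,x_n be elements of a commutative ring and u an element with (u - x_1)⋯(u - x_n) = 0. Then for every r ≥ 0, u^{n+r} = ∑_{s=1}^{n} ∑_{t=1}^{s} (-1)^{s-t} e_{s-t}(x_1,…,x_n) h_{r+t}(x_1,…,x_n) u^{n-s}. -/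
/-!
Work with generating functions. With `E(t) = ∏ (1 - xᵢ t) = ∑ (-1)ᵏ eₖ tᵏ` and
`H(t) = ∏ (1 - xᵢ t)⁻¹ = ∑ hₖ tᵏ` we have `E H = 1`, so the series `A(t) = ∑ uᵏ tᵏ` satisfies
`A = H · (E A)`. The coefficient of `tᵏ` in `E A` is `∑_{j ≤ k} (-1)ʲ eⱼ u^{k-j}`, which for `k ≥ n`
equals `u^{k-n} ∏ (u - xᵢ) = 0`. Hence `u^{n+r}`, the coefficient of `t^{n+r}` in `H · (E A)`, only
involves `h_{r+t}` against the coefficients of `E A` of degree `n - t < n`, which is the claimed sum.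
-/

open Finset

open PowerSeries

theorem pow_eq_sum_antidiagonal_coeff_mul_coeff {R : Type*} [CommSemiring R] {φ ψ : R⟦X⟧}
    (h : φ * ψ = 1) (u : R) (m : ℕ) :
    u ^ m = ∑ p ∈ antidiagonal m, coeff p.1 ψ * coeff p.2 (φ * PowerSeries.mk (u ^ ·)) := by
  have : PowerSeries.mk (u ^ ·) = ψ * (φ * PowerSeries.mk (u ^ ·)) := by
    rw [← mul_assoc, mul_comm ψ, h, one_mul]
  simpa [coeff_mul] using congrArg (coeff m) this

lemma coeff_sub_mk_mul_mk_pow {R : Type*} [CommSemiring R] (e : ℕ → R) (u : R) {t n : ℕ}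
    (ht : t ≤ n) :
    coeff (n - t) (PowerSeries.mk e * PowerSeries.mk (u ^ ·)) =
      ∑ k ∈ Icc t n, e (k - t) * u ^ (n - k) := by
  rw [coeff_mul]
  symm
  refine sum_nbij' (fun k => (k - t, n - k)) (fun p => p.1 + t) ?_ ?_ ?_ ?_
    (fun _ _ => by simp) <;>
  · simp only [HasAntidiagonal.mem_antidiagonal, mem_Icc, Prod.ext_iff]
    omega

lemma one_sub_C_mul_X_mul_mk_pow {R : Type*} [CommRing R] (a : R) :
    (1 - C a * X) * PowerSeries.mk (a ^ ·) = 1 := by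
  have : PowerSeries.mk (a ^ ·) = rescale a (PowerSeries.mk 1) := by ext; simp
  rw [this, ← rescale_X, ← map_one (rescale a), ← map_sub, ← map_mul, mul_comm,
    mk_one_mul_one_sub_eq_one, map_one]

section Semiring

variable {σ R : Type*} [CommSemiring R] (x : σ → R)

def esymmOn (s : Finset σ) (k : ℕ) : R := ∑ A ∈ s.powersetCard k, ∏ i ∈ A, x i

def hsymmOn [DecidableEq σ] (s : Finset σ) (k : ℕ) : R :=
  ∑ m ∈ s.sym k, ((m : Multiset σ).map x).prod

@[simp] lemma esymmOn_zero (s : Finset σ) : esymmOn x s 0 = 1 := by simp [esymmOn]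

lemma esymmOn_eq_zero {s : Finset σ} {k : ℕ} (hk : #s < k) : esymmOn x s k = 0 := by
  simp [esymmOn, powersetCard_eq_empty.mpr hk]

lemma esymmOn_insert_succ [DecidableEq σ] {a : σ} {s : Finset σ} (ha : a ∉ s) (k : ℕ) :
    esymmOn x (insert a s) (k + 1) = esymmOn x s (k + 1) + x a * esymmOn x s k := by
  simp only [esymmOn, ← esymm_map_val, insert_val_of_notMem ha, Multiset.map_cons,
    Multiset.esymm, Multiset.powersetCard_cons, Multiset.map_add, Multiset.sum_add,
    Multiset.map_map, Function.comp_def, Multiset.prod_cons, Multiset.sum_map_mul_left]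

lemma hsymmOn_insert [DecidableEq σ] {a : σ} {s : Finset σ} (ha : a ∉ s) (k : ℕ) :
    hsymmOn x (insert a s) k = ∑ p ∈ antidiagonal k, x a ^ p.1 * hsymmOn x s p.2 := by
  rw [hsymmOn, ← sum_coe_sort, Fintype.sum_equiv (symInsertEquiv ha) _
    (fun p => x a ^ (p.1 : ℕ) * (p.2.1.1.map x).prod), Fintype.sum_sigma,
    Nat.sum_antidiagonal_eq_sum_range_succ_mk, ← Fin.sum_univ_eq_sum_range]
  · refine sum_congr rfl fun i _ => ?_
    rw [hsymmOn, mul_sum]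
    exact sum_coe_sort _ (fun m : Sym σ (k - i) => x a ^ (i : ℕ) * (m.1.map x).prod)
  · intro m
    conv_lhs => rw [← Sym.fill_filterNe a m.1]
    simp [Sym.coe_fill, Sym.coe_replicate, mul_comm]

end Semiring

section Ring

variable {σ R : Type*} [CommRing R] (x : σ → R)

lemma prod_sub_eq_sum_esymmOn (s : Finset σ) (u : R) :
    ∏ i ∈ s, (u - x i) = ∑ j ∈ range (#s + 1), (-1) ^ j * esymmOn x s j * u ^ (#s - j) := by
  have := congrArg (Polynomial.eval u) (Multiset.prod_X_sub_X_eq_sum_esymm (s.val.map x))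
  simpa [Polynomial.eval_prod, Polynomial.eval_finsetSum, esymm_map_val, esymmOn, mul_assoc]
    using this

def signedEsymmSeries (s : Finset σ) : R⟦X⟧ := PowerSeries.mk fun k => (-1) ^ k * esymmOn x s k

def hsymmSeries [DecidableEq σ] (s : Finset σ) : R⟦X⟧ := PowerSeries.mk (hsymmOn x s)

@[simp] lemma coeff_hsymmSeries [DecidableEq σ] (s : Finset σ) (k : ℕ) :
    coeff k (hsymmSeries x s) = hsymmOn x s k :=
  coeff_mk _ _

lemma signedEsymmSeries_empty : signedEsymmSeries x ∅ = 1 := by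
  ext (_ | k)
  · simp [signedEsymmSeries]
  · simp [signedEsymmSeries, esymmOn_eq_zero x (s := ∅) k.succ_pos]

lemma hsymmSeries_empty [DecidableEq σ] : hsymmSeries x ∅ = 1 := by
  ext (_ | k) <;> simp [hsymmSeries, hsymmOn, Sym.eq_nil_of_card_zero]

lemma signedEsymmSeries_insert [DecidableEq σ] {a : σ} {s : Finset σ} (ha : a ∉ s) :
    signedEsymmSeries x (insert a s) = (1 - C (x a) * X) * signedEsymmSeries x s := by
  ext (_ | k)
  · simp [signedEsymmSeries]
  · simp [signedEsymmSeries, sub_mul, mul_assoc, esymmOn_insert_succ x ha, pow_succ]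
    ring

lemma hsymmSeries_insert [DecidableEq σ] {a : σ} {s : Finset σ} (ha : a ∉ s) :
    hsymmSeries x (insert a s) = PowerSeries.mk (x a ^ ·) * hsymmSeries x s := by
  ext k
  simp [hsymmSeries, coeff_mul, hsymmOn_insert x ha]

lemma signedEsymmSeries_mul_hsymmSeries [DecidableEq σ] (s : Finset σ) :
    signedEsymmSeries x s * hsymmSeries x s = 1 := by
  induction s using Finset.induction_on with
  | empty => rw [signedEsymmSeries_empty, hsymmSeries_empty, one_mul]
  | insert a s ha ih =>
    rw [signedEsymmSeries_insert x ha, hsymmSeries_insert x ha, mul_mul_mul_comm,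
      one_sub_C_mul_X_mul_mk_pow, one_mul, ih]

lemma coeff_signedEsymmSeries_mul_mk_pow_eq_zero {s : Finset σ} {u : R}
    (hu : ∏ i ∈ s, (u - x i) = 0) {k : ℕ} (hk : #s ≤ k) :
    coeff k (signedEsymmSeries x s * PowerSeries.mk (u ^ ·)) = 0 := by
  obtain ⟨d, rfl⟩ := Nat.exists_eq_add_of_le hk
  rw [prod_sub_eq_sum_esymmOn] at hu
  calc coeff (#s + d) (signedEsymmSeries x s * PowerSeries.mk (u ^ ·))
      = ∑ j ∈ range (#s + d + 1), (-1) ^ j * esymmOn x s j * u ^ (#s + d - j) := by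
        simp [signedEsymmSeries, coeff_mul, Nat.sum_antidiagonal_eq_sum_range_succ_mk]
    _ = ∑ j ∈ range (#s + 1), (-1) ^ j * esymmOn x s j * u ^ (#s + d - j) := by
        refine (sum_subset (range_subset_range.2 (by omega)) fun j _ hj => ?_).symm
        rw [esymmOn_eq_zero x (by simpa using hj), mul_zero, zero_mul]
    _ = u ^ d * ∑ j ∈ range (#s + 1), (-1) ^ j * esymmOn x s j * u ^ (#s - j) := by
        rw [mul_sum]
        refine sum_congr rfl fun j hj => ?_
        rw [show #s + d - j = #s - j + d by simp at hj; omega, pow_add]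
        ring
    _ = 0 := by rw [hu, mul_zero]

theorem pow_card_add_eq_sum_hsymmOn_mul_coeff [DecidableEq σ] {s : Finset σ} {u : R}
    (hu : ∏ i ∈ s, (u - x i) = 0) (r : ℕ) :
    u ^ (#s + r) = ∑ t ∈ Icc 1 #s,
      hsymmOn x s (r + t) * coeff (#s - t) (signedEsymmSeries x s * PowerSeries.mk (u ^ ·)) := by
  rw [pow_eq_sum_antidiagonal_coeff_mul_coeff (signedEsymmSeries_mul_hsymmSeries x s) u,
    ← sum_filter_of_ne (p := fun p => p.2 < #s) fun p _ hp => ?_]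
  · symm
    refine sum_nbij' (fun t => (r + t, #s - t)) (fun p => #s - p.2) ?_ ?_ ?_ ?_
      (fun _ _ => by simp) <;>
    · simp only [mem_filter, HasAntidiagonal.mem_antidiagonal, mem_Icc, Prod.ext_iff]
      omega
  · by_contra hs
    exact hp (by rw [coeff_signedEsymmSeries_mul_mk_pow_eq_zero x hu (not_lt.1 hs), mul_zero])

theorem pow_card_add_eq_sum_esymmOn_hsymmOn [DecidableEq σ] {s : Finset σ} {u : R}
    (hu : ∏ i ∈ s, (u - x i) = 0) (r : ℕ) :
    u ^ (#s + r) = ∑ k ∈ Icc 1 #s, ∑ t ∈ Icc 1 k,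
      (-1) ^ (k - t) * esymmOn x s (k - t) * hsymmOn x s (r + t) * u ^ (#s - k) := by
  rw [pow_card_add_eq_sum_hsymmOn_mul_coeff x hu r,
    sum_comm' (t' := Icc 1 #s) (s' := fun t => Icc t #s) (by intros; simp only [mem_Icc]; omega)]
  refine sum_congr rfl fun t ht => ?_
  rw [signedEsymmSeries, coeff_sub_mk_mul_mk_pow _ u (mem_Icc.1 ht).2, mul_sum]
  exact sum_congr rfl fun k _ => by ring

end Ring

/-- If `(u-x_1)⋯(u-x_n) = 0`, then for every `r ≥ 0`,
`u^{n+r} = ∑_{s=1}^{n} ∑_{t=1}^{s} (-1)^{s-t} e_{s-t} h_{r+t} u^{n-s}`. -/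
theorem pow_eq_sum_esymm_hsymm' {R : Type*} [CommRing R] (n : ℕ) (x : Fin n → R)
    (u : R) (hu : ∏ i, (u - x i) = 0) (r : ℕ) :
    u ^ (n + r) =
      ∑ s ∈ Finset.Icc 1 n, ∑ t ∈ Finset.Icc 1 s,
        (-1 : R) ^ (s - t) * esymF x (s - t) * hsymF x (r + t) * u ^ (n - s) := by
  have h := pow_card_add_eq_sum_esymmOn_hsymmOn x hu r
  rw [card_fin] at h
  exact h
end

section
/- Let μ and ν be compositions of n and λ the transpose (conjugate) of the partition obtained by sorting μ. Let I^μ_ν be the ideal of P_ν = ℂ[x_1,…,x_n]^{S_ν} generated by the elements h_r(ν; i_1,…,i_m) for all m ≥ 1, distinct integers i_1,…,i_m, and r > λ_1 + ⋯ + λ_m − ν_{i_1} − ⋯ − ν_{i_m}. Then I^μ_ν is also generated by the elements e_r(ν; i_1,…,i_m) for all m ≥ 1, distinct integers i_1,…,i_m, and r > ν_{i_1} + ⋯ + ν_{i_m} − λ_{l+1} − λ_{l+2} − ⋯, where l is the number of indices i with ν_i > 0 and i ∉ {i_1,…,i_m}. -/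
open Finset MvPolynomial

/-- The Young (parabolic) subgroup `S_ν` of `S_n` attached to the block-assignment
function `c : Fin n → ℤ` (so `ν_i = #{j | c j = i}`). -/
def youngSubgroup (n : ℕ) (c : Fin n → ℤ) : Subgroup (Equiv.Perm (Fin n)) where
  carrier := {σ | ∀ j, c (σ j) = c j}
  one_mem' := fun _ => rfl
  mul_mem' := by
    intro σ τ hσ hτ j
    have h1 := hσ (τ j)
    have h2 := hτ j
    simpa [Equiv.Perm.mul_apply, h2] using h1
  inv_mem' := by
    intro σ hσ j
    have := hσ (σ⁻¹ j)
    simpa using this.symm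

/-- The subalgebra of `W`-invariant polynomials `P_ν = ℂ[x_1,…,x_n]^{S_ν}`. -/
noncomputable def invariantSubalgebra (n : ℕ) (W : Subgroup (Equiv.Perm (Fin n))) :
    Subalgebra ℂ (MvPolynomial (Fin n) ℂ) where
  carrier := {f | ∀ σ ∈ W, rename (⇑σ) f = f}
  mul_mem' := by
    intro a b ha hb σ hσ
    rw [map_mul, ha σ hσ, hb σ hσ]
  add_mem' := by
    intro a b ha hb σ hσ
    rw [map_add, ha σ hσ, hb σ hσ]
  algebraMap_mem' := by
    intro r σ hσ
    exact (rename (⇑σ)).commutes r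

/-- `ν_i`: the size of the `i`-th block. -/
def nuPart (n : ℕ) (c : Fin n → ℤ) (i : ℤ) : ℕ :=
  (Finset.univ.filter (fun j => c j = i)).card

/-- `h_r(ν; i_1,…,i_m)`: the `r`-th complete homogeneous symmetric polynomial in the
variables lying in the blocks indexed by the finset `S`. -/
noncomputable def hIn (n : ℕ) (c : Fin n → ℤ) (S : Finset ℤ) (r : ℕ) :
    MvPolynomial (Fin n) ℂ :=
  ∑ m ∈ (Finset.univ.filter (fun j => c j ∈ S)).sym r,
    ((m : Multiset (Fin n)).map X).prod

/-- `e_r(ν; i_1,…,i_m)`: the `r`-th elementary symmetric polynomial in the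
variables lying in the blocks indexed by the finset `S`. -/
noncomputable def eIn (n : ℕ) (c : Fin n → ℤ) (S : Finset ℤ) (r : ℕ) :
    MvPolynomial (Fin n) ℂ :=
  ∑ T ∈ Finset.powersetCard r (Finset.univ.filter (fun j => c j ∈ S)), ∏ j ∈ T, X j

/-- `λ_j` (here `lamPart μ 0 = λ_1`, etc.): the transpose partition of `μ`,
`λ_j = #{i | μ_i ≥ j}`. -/
def lamPart (μ : ℤ →₀ ℕ) (j : ℕ) : ℕ :=
  (μ.support.filter (fun i => j + 1 ≤ μ i)).card

/-!
Write `B` for the set of occupied blocks. The generating functions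
`∑ h_r(A) tʳ = ∏_{a ∈ A} (1 - x_a t)⁻¹` and `∑ (-1)ʳ e_r(A) tʳ = ∏_{a ∈ A} (1 - x_a t)` give
`h_r(A) ≡ (-1)ʳ e_r(Aᶜ)` modulo the ideal `J` generated by the full complete symmetric
functions of positive degree, and `J` is also generated by the full elementary symmetric
functions, since `∑_{p+q=r} (-1)^q h_p e_q = 0` for `r > 0`. Both generating sets contain
generators of `J` (take `S = B`). Since `∑_j λ_j = n`, an `h`-generator on `S` satisfies the
bound of an `e`-generator on `B \ S`, and an `e`-generator on `S` the bound of an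
`h`-generator on `B \ S`.
-/

namespace MvPolynomial

variable {σ : Type*} (R : Type*)

section CommSemiring

variable [CommSemiring R]

noncomputable def hsymmOn [DecidableEq σ] (A : Finset σ) (r : ℕ) : MvPolynomial σ R :=
  ∑ m ∈ A.sym r, ((m : Multiset σ).map X).prod

noncomputable def esymmOn (A : Finset σ) (r : ℕ) : MvPolynomial σ R :=
  ∑ T ∈ A.powersetCard r, ∏ j ∈ T, X j

variable {R}

@[simp]
lemma hsymmOn_zero [DecidableEq σ] (A : Finset σ) : hsymmOn R A 0 = 1 := by
  rw [hsymmOn, Finset.sym_zero, Finset.sum_singleton]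
  rfl

@[simp]
lemma esymmOn_zero (A : Finset σ) : esymmOn R A 0 = 1 := by
  simp [esymmOn]

lemma hsymmOn_empty [DecidableEq σ] {r : ℕ} (hr : r ≠ 0) :
    hsymmOn R (∅ : Finset σ) r = 0 := by
  obtain ⟨k, rfl⟩ := Nat.exists_eq_succ_of_ne_zero hr
  simp [hsymmOn]

lemma esymmOn_empty {r : ℕ} (hr : r ≠ 0) : esymmOn R (∅ : Finset σ) r = 0 := by
  rw [esymmOn, Finset.powersetCard_eq_empty.2 (by simpa using Nat.pos_of_ne_zero hr),
    Finset.sum_empty]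

lemma rename_hsymmOn [DecidableEq σ] {τ : Type*} [DecidableEq τ] (f : σ ↪ τ) (A : Finset σ)
    (r : ℕ) : rename f (hsymmOn R A r) = hsymmOn R (A.map f) r := by
  simp [hsymmOn, Finset.sym_map, map_sum, map_multiset_prod, Multiset.map_map]

lemma rename_esymmOn {τ : Type*} (f : σ ↪ τ) (A : Finset σ) (r : ℕ) :
    rename f (esymmOn R A r) = esymmOn R (A.map f) r := by
  simp [esymmOn, Finset.powersetCard_map, map_sum, map_prod]

lemma esymmOn_insert [DecidableEq σ] {a : σ} {A : Finset σ} (ha : a ∉ A) (r : ℕ) :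
    esymmOn R (insert a A) (r + 1) = esymmOn R A (r + 1) + X a * esymmOn R A r := by
  have notMem : ∀ T ∈ A.powersetCard r, a ∉ T := fun T hT haT =>
    ha ((Finset.mem_powersetCard.1 hT).1 haT)
  rw [esymmOn, Finset.powersetCard_succ_insert ha, Finset.sum_union, Finset.sum_image,
    esymmOn, esymmOn, Finset.mul_sum]
  · exact congrArg _ (Finset.sum_congr rfl fun T hT => Finset.prod_insert (notMem T hT))
  · intro T hT T' hT' hTT'
    rw [← Finset.erase_insert (notMem T hT), ← Finset.erase_insert (notMem T' hT'), hTT']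
  · refine Finset.disjoint_left.2 fun T hT hT' => ?_
    obtain ⟨U, -, rfl⟩ := Finset.mem_image.1 hT'
    exact ha ((Finset.mem_powersetCard.1 hT).1 (Finset.mem_insert_self a U))

lemma hsymmOn_insert [DecidableEq σ] {a : σ} {A : Finset σ} (ha : a ∉ A) (r : ℕ) :
    hsymmOn R (insert a A) r = ∑ i ∈ Finset.range (r + 1), X a ^ i * hsymmOn R A (r - i) := by
  rw [hsymmOn, ← Finset.sum_coe_sort, ← (Finset.symInsertEquiv ha).symm.sum_comp,
    ← Finset.univ_sigma_univ, Finset.sum_sigma, ← Fin.sum_univ_eq_sum_range]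
  refine Finset.sum_congr rfl fun i _ => ?_
  rw [hsymmOn, Finset.mul_sum, ← Finset.sum_coe_sort (A.sym (r - i))]
  refine Finset.sum_congr rfl fun m _ => ?_
  rw [Finset.symInsertEquiv_symm_apply_coe, Sym.coe_fill, Multiset.map_add, Multiset.prod_add,
    mul_comm, Sym.coe_replicate, Multiset.map_replicate, Multiset.prod_replicate]

end CommSemiring

section CommRing

variable [CommRing R]

noncomputable def esymmSeries (A : Finset σ) : PowerSeries (MvPolynomial σ R) :=
  PowerSeries.mk fun r => (-1) ^ r * esymmOn R A r

noncomputable def hsymmSeries [DecidableEq σ] (A : Finset σ) : PowerSeries (MvPolynomial σ R) :=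
  PowerSeries.mk (hsymmOn R A)

variable {R}

lemma esymmSeries_empty : esymmSeries R (∅ : Finset σ) = 1 := by
  refine PowerSeries.ext fun r => ?_
  cases r <;> simp [esymmSeries, PowerSeries.coeff_one, esymmOn_empty]

variable [DecidableEq σ]

lemma hsymmSeries_empty : hsymmSeries R (∅ : Finset σ) = 1 := by
  refine PowerSeries.ext fun r => ?_
  cases r <;> simp [hsymmSeries, PowerSeries.coeff_one, hsymmOn_empty]

lemma hsymmSeries_insert {a : σ} {A : Finset σ} (ha : a ∉ A) :
    hsymmSeries R (insert a A) =
      PowerSeries.rescale (X a) (PowerSeries.mk 1) * hsymmSeries R A := by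
  refine PowerSeries.ext fun r => ?_
  rw [PowerSeries.rescale_mk, PowerSeries.coeff_mul,
    Finset.Nat.sum_antidiagonal_eq_sum_range_succ_mk]
  simp [hsymmSeries, hsymmOn_insert ha]

lemma esymmSeries_insert {a : σ} {A : Finset σ} (ha : a ∉ A) :
    esymmSeries R (insert a A) =
      PowerSeries.rescale (X a) (1 - PowerSeries.X) * esymmSeries R A := by
  refine PowerSeries.ext fun r => ?_
  rw [map_sub, map_one, PowerSeries.rescale_X, sub_mul, one_mul, mul_assoc, map_sub,
    PowerSeries.coeff_C_mul]
  cases r with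
  | zero => simp [esymmSeries]
  | succ r =>
    simp only [esymmSeries, PowerSeries.coeff_succ_X_mul, PowerSeries.coeff_mk,
      esymmOn_insert ha]
    ring

lemma hsymmSeries_mul_esymmSeries (A : Finset σ) : hsymmSeries R A * esymmSeries R A = 1 := by
  induction A using Finset.induction_on with
  | empty => rw [hsymmSeries_empty, esymmSeries_empty, one_mul]
  | insert a A ha ih =>
    rw [hsymmSeries_insert ha, esymmSeries_insert ha, mul_mul_mul_comm, ← map_mul,
      PowerSeries.mk_one_mul_one_sub_eq_one, map_one, one_mul, ih]

lemma hsymmSeries_union {A B : Finset σ} (h : Disjoint A B) :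
    hsymmSeries R (A ∪ B) = hsymmSeries R A * hsymmSeries R B := by
  induction B using Finset.induction_on with
  | empty => rw [Finset.union_empty, hsymmSeries_empty, mul_one]
  | insert b B hb ih =>
    rw [Finset.disjoint_insert_right] at h
    rw [Finset.union_insert, hsymmSeries_insert (by simp [hb, h.1]), hsymmSeries_insert hb,
      ih h.2, mul_left_comm]

lemma hsymmSeries_eq_esymmSeries_mul {A B : Finset σ} (h : Disjoint A B) :
    hsymmSeries R A = esymmSeries R B * hsymmSeries R (A ∪ B) := by
  rw [hsymmSeries_union h, mul_left_comm, mul_comm (esymmSeries R B),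
    hsymmSeries_mul_esymmSeries, mul_one]

lemma hsymmOn_eq_sum_antidiagonal {A B : Finset σ} (h : Disjoint A B) (r : ℕ) :
    hsymmOn R A r = ∑ p ∈ antidiagonal r,
      (-1) ^ p.1 * esymmOn R B p.1 * hsymmOn R (A ∪ B) p.2 := by
  simpa [hsymmSeries, esymmSeries, PowerSeries.coeff_mul] using
    congrArg (PowerSeries.coeff r) (hsymmSeries_eq_esymmSeries_mul (R := R) h)

lemma sum_antidiagonal_hsymmOn_mul_esymmOn (A : Finset σ) {r : ℕ} (hr : r ≠ 0) :
    ∑ p ∈ antidiagonal r, hsymmOn R A p.1 * ((-1) ^ p.2 * esymmOn R A p.2) = 0 := by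
  simpa [hsymmSeries, esymmSeries, PowerSeries.coeff_mul, PowerSeries.coeff_one, hr] using
    congrArg (PowerSeries.coeff r) (hsymmSeries_mul_esymmSeries (R := R) A)

end CommRing

end MvPolynomial

lemma sum_antidiagonal_mul_sub_mem_span {P : Type*} [Ring P] (a b : ℕ → P) (hb : b 0 = 1)
    (r : ℕ) :
    ∑ p ∈ antidiagonal r, a p.1 * b p.2 - a r ∈
      Ideal.span (Set.range fun q => b (q + 1)) := by
  cases r with
  | zero => simp [hb]
  | succ r =>
    rw [Finset.Nat.sum_antidiagonal_succ', hb, mul_one, add_sub_cancel_left]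
    exact Ideal.sum_mem _ fun p _ => Ideal.mul_mem_left _ _ (Ideal.subset_span ⟨p.2, rfl⟩)

lemma sum_range_lamPart {n : ℕ} {μ : ℤ →₀ ℕ} (hμ : μ.sum (fun _ m => m) = n) :
    ∑ j ∈ range n, lamPart μ j = n := by
  have hle : ∀ i, μ i ≤ n := fun i => by
    by_cases hi : i ∈ μ.support
    · exact hμ ▸ Finset.single_le_sum (fun _ _ => Nat.zero_le _) hi
    · simp [Finsupp.notMem_support_iff.1 hi]
  calc ∑ j ∈ range n, lamPart μ j
      = ∑ i ∈ μ.support, #((range n).filter fun j => j + 1 ≤ μ i) := by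
        simp only [lamPart, card_filter]
        exact Finset.sum_comm
    _ = ∑ i ∈ μ.support, μ i := by
        refine sum_congr rfl fun i _ => ?_
        have := hle i
        rw [show (range n).filter (fun j => j + 1 ≤ μ i) = range (μ i) by ext; simp; omega,
          card_range]
    _ = n := hμ

section YoungInvariants

variable {n : ℕ} (c : Fin n → ℤ)

def blockVars (S : Finset ℤ) : Finset (Fin n) := univ.filter fun j => c j ∈ S

lemma hIn_eq_hsymmOn (S : Finset ℤ) (r : ℕ) : hIn n c S r = hsymmOn ℂ (blockVars c S) r := rfl

lemma eIn_eq_esymmOn (S : Finset ℤ) (r : ℕ) : eIn n c S r = esymmOn ℂ (blockVars c S) r := rfl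

lemma sum_nuPart (S : Finset ℤ) : ∑ i ∈ S, nuPart n c i = #(blockVars c S) := by
  rw [card_eq_sum_card_fiberwise (f := c) (s := blockVars c S) (t := S)
    fun j hj => (mem_filter.1 hj).2]
  refine sum_congr rfl fun i hi => congrArg card ?_
  ext j
  simp only [blockVars, mem_filter, mem_univ, true_and]
  exact ⟨fun h => ⟨h ▸ hi, h⟩, And.right⟩

@[simp]
lemma blockVars_empty : blockVars c ∅ = ∅ := by
  simp [blockVars]

lemma blockVars_image_univ : blockVars c (univ.image c) = univ := by
  simp [blockVars]

lemma blockVars_image_univ_sdiff (S : Finset ℤ) :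
    blockVars c (univ.image c \ S) = (blockVars c S)ᶜ := by
  ext j
  simp [blockVars]

lemma map_blockVars {σ : Equiv.Perm (Fin n)} (hσ : σ ∈ youngSubgroup n c) (S : Finset ℤ) :
    (blockVars c S).map σ.toEmbedding = blockVars c S := by
  ext j
  simp only [blockVars, mem_map_equiv, mem_filter, mem_univ, true_and]
  rw [← hσ (σ.symm j), Equiv.apply_symm_apply]

abbrev YoungInvariants := ↥(invariantSubalgebra n (youngSubgroup n c))

noncomputable def hInP (S : Finset ℤ) (r : ℕ) : YoungInvariants c :=
  ⟨hIn n c S r, fun σ hσ => by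
    rw [hIn_eq_hsymmOn, ← Equiv.coe_toEmbedding, rename_hsymmOn, map_blockVars c hσ]⟩

noncomputable def eInP (S : Finset ℤ) (r : ℕ) : YoungInvariants c :=
  ⟨eIn n c S r, fun σ hσ => by
    rw [eIn_eq_esymmOn, ← Equiv.coe_toEmbedding, rename_esymmOn, map_blockVars c hσ]⟩

@[simp]
lemma coe_hInP (S : Finset ℤ) (r : ℕ) : (hInP c S r : MvPolynomial (Fin n) ℂ) = hIn n c S r :=
  rfl

@[simp]
lemma coe_eInP (S : Finset ℤ) (r : ℕ) : (eInP c S r : MvPolynomial (Fin n) ℂ) = eIn n c S r :=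
  rfl

lemma hInP_zero (S : Finset ℤ) : hInP c S 0 = 1 :=
  Subtype.ext (hsymmOn_zero (blockVars c S))

lemma eInP_zero (S : Finset ℤ) : eInP c S 0 = 1 :=
  Subtype.ext (esymmOn_zero (blockVars c S))

lemma hInP_empty {r : ℕ} (hr : r ≠ 0) : hInP c ∅ r = 0 :=
  Subtype.ext <| by simpa [hIn_eq_hsymmOn] using hsymmOn_empty hr

lemma eInP_congr {S T : Finset ℤ} (h : blockVars c S = blockVars c T) (r : ℕ) :
    eInP c S r = eInP c T r :=
  Subtype.ext <| by simp [eIn_eq_esymmOn, h]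

lemma hInP_sub_eInP_mem_span {S T : Finset ℤ} (hST : blockVars c T = (blockVars c S)ᶜ)
    (r : ℕ) :
    hInP c S r - (-1) ^ r * eInP c T r ∈
      Ideal.span (Set.range fun q => hInP c (univ.image c) (q + 1)) := by
  have expand : hInP c S r = ∑ p ∈ antidiagonal r,
      (-1) ^ p.1 * eInP c T p.1 * hInP c (univ.image c) p.2 := by
    apply Subtype.ext
    push_cast
    simp only [coe_hInP, coe_eInP, hIn_eq_hsymmOn, eIn_eq_esymmOn, hST, blockVars_image_univ]
    rw [hsymmOn_eq_sum_antidiagonal disjoint_compl_right, union_compl]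
  rw [expand]
  exact sum_antidiagonal_mul_sub_mem_span (fun p => (-1) ^ p * eInP c T p) _ (hInP_zero c _) r

lemma span_hInP_univ_le_span_eInP_univ :
    Ideal.span (Set.range fun q => hInP c (univ.image c) (q + 1)) ≤
      Ideal.span (Set.range fun p => eInP c (univ.image c) (p + 1)) := by
  refine Ideal.span_le.2 ?_
  rintro _ ⟨q, rfl⟩
  have newton : ∑ p ∈ antidiagonal (q + 1),
      hInP c (univ.image c) p.1 * ((-1) ^ p.2 * eInP c (univ.image c) p.2) = 0 := by
    apply Subtype.ext
    push_cast
    simp only [coe_hInP, coe_eInP, hIn_eq_hsymmOn, eIn_eq_esymmOn, blockVars_image_univ]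
    exact sum_antidiagonal_hsymmOn_mul_esymmOn _ q.succ_ne_zero
  have h := sum_antidiagonal_mul_sub_mem_span (hInP c (univ.image c))
    (fun p => (-1) ^ p * eInP c (univ.image c) p) (by simp [eInP_zero]) (q + 1)
  rw [newton, zero_sub, neg_mem_iff] at h
  refine Ideal.span_le.2 ?_ h
  rintro _ ⟨p, rfl⟩
  exact Ideal.mul_mem_left _ _ (Ideal.subset_span ⟨p, rfl⟩)

end YoungInvariants

section Tanisaki

variable {n : ℕ} (μ : ℤ →₀ ℕ) (c : Fin n → ℤ)

def hBound (S : Finset ℤ) : ℤ :=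
  (∑ j ∈ range #S, (lamPart μ j : ℤ)) - ∑ i ∈ S, (nuPart n c i : ℤ)

def eBound (S : Finset ℤ) : ℤ :=
  (∑ i ∈ S, (nuPart n c i : ℤ)) - ∑ j ∈ Ico #(univ.image c \ S) n, (lamPart μ j : ℤ)

def tanisakiHGens : Set (YoungInvariants c) :=
  {f | ∃ (S : Finset ℤ) (r : ℕ), S.Nonempty ∧ hBound μ c S < r ∧
    (f : MvPolynomial (Fin n) ℂ) = hIn n c S r}

def tanisakiEGens : Set (YoungInvariants c) :=
  {f | ∃ (S : Finset ℤ) (r : ℕ), S.Nonempty ∧ eBound μ c S < r ∧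
    (f : MvPolynomial (Fin n) ℂ) = eIn n c S r}

variable {μ c}

lemma hBound_eq (S : Finset ℤ) :
    hBound μ c S = (∑ j ∈ range #S, lamPart μ j : ℕ) - (#(blockVars c S) : ℤ) := by
  rw [hBound, ← Nat.cast_sum, ← Nat.cast_sum, sum_nuPart]

lemma hInP_mem_span_tanisakiHGens {S : Finset ℤ} {r : ℕ} (h : hBound μ c S < r) :
    hInP c S r ∈ Ideal.span (tanisakiHGens μ c) := by
  rcases S.eq_empty_or_nonempty with rfl | hS
  · simp only [hBound, card_empty, range_zero, sum_empty, sub_zero, Nat.cast_pos] at h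
    rw [hInP_empty c h.ne']
    exact zero_mem _
  · exact Ideal.subset_span ⟨S, r, hS, h, rfl⟩

lemma eInP_mem_span_tanisakiEGens {S : Finset ℤ} {r : ℕ} (h : eBound μ c S < r) :
    eInP c S r ∈ Ideal.span (tanisakiEGens μ c) := by
  -- a label `z` of no variable makes `S` nonempty without changing the generator or its bound
  obtain ⟨z, hz⟩ := Infinite.exists_notMem_finset (univ.image c)
  have hvars : blockVars c (insert z S) = blockVars c S := by
    ext j
    simp only [blockVars, mem_filter, mem_univ, true_and, mem_insert, or_iff_right_iff_imp]
    rintro rfl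
    exact absurd (mem_image_of_mem c (mem_univ j)) hz
  have hsdiff : univ.image c \ insert z S = univ.image c \ S := by
    rw [sdiff_insert, erase_eq_of_notMem (fun hz' => hz (mem_sdiff.1 hz').1)]
  have hbound : eBound μ c (insert z S) = eBound μ c S := by
    rw [eBound, eBound, ← Nat.cast_sum, sum_nuPart, hvars, ← sum_nuPart, Nat.cast_sum, hsdiff]
  rw [← eInP_congr c hvars]
  exact Ideal.subset_span ⟨insert z S, r, insert_nonempty z S, hbound ▸ h, rfl⟩

variable (hμ : μ.sum (fun _ m => m) = n)
include hμ

lemma eBound_eq (S : Finset ℤ) :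
    eBound μ c S =
      (#(blockVars c S) : ℤ) + (∑ j ∈ range #(univ.image c \ S), lamPart μ j : ℕ) - n := by
  have hcard : #(univ.image c \ S) ≤ n :=
    (card_le_card sdiff_subset).trans (card_image_le.trans_eq (card_fin n))
  have hsplit := sum_range_add_sum_Ico (fun j => lamPart μ j) hcard
  rw [sum_range_lamPart hμ] at hsplit
  rw [eBound, ← Nat.cast_sum, ← Nat.cast_sum, sum_nuPart]
  omega

lemma hBound_image_univ_le_zero : hBound μ c (univ.image c) ≤ 0 := by
  have hmono : ∑ j ∈ range #(univ.image c), lamPart μ j ≤ ∑ j ∈ range n, lamPart μ j :=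
    sum_le_sum_of_subset (range_subset_range.2 (card_image_le.trans_eq (card_fin n)))
  have htotal := sum_range_lamPart hμ
  rw [hBound_eq, blockVars_image_univ, card_univ, Fintype.card_fin]
  omega

lemma eBound_image_univ : eBound μ c (univ.image c) = 0 := by
  rw [eBound_eq hμ, blockVars_image_univ, sdiff_self, bot_eq_empty, card_empty, card_univ,
    Fintype.card_fin]
  simp

lemma hBound_image_univ_sdiff (S : Finset ℤ) : hBound μ c (univ.image c \ S) = eBound μ c S := by
  have hS : #(blockVars c S) ≤ n := card_le_univ _ |>.trans_eq (Fintype.card_fin n)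
  rw [hBound_eq, eBound_eq hμ, blockVars_image_univ_sdiff, card_compl, Fintype.card_fin]
  omega

lemma eBound_image_univ_sdiff_le (S : Finset ℤ) :
    eBound μ c (univ.image c \ S) ≤ hBound μ c S := by
  have hmono :
      ∑ j ∈ range #(univ.image c ∩ S), lamPart μ j ≤ ∑ j ∈ range #S, lamPart μ j :=
    sum_le_sum_of_subset (range_subset_range.2 (card_le_card inter_subset_right))
  have hS : #(blockVars c S) ≤ n := card_le_univ _ |>.trans_eq (Fintype.card_fin n)
  rw [eBound_eq hμ, hBound_eq, blockVars_image_univ_sdiff, card_compl, Fintype.card_fin,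
    sdiff_sdiff_right_self, inf_eq_inter]
  omega

lemma span_hInP_univ_le_span_tanisakiHGens :
    Ideal.span (Set.range fun q => hInP c (univ.image c) (q + 1)) ≤
      Ideal.span (tanisakiHGens μ c) :=
  Ideal.span_le.2 <| Set.range_subset_iff.2 fun q => hInP_mem_span_tanisakiHGens <|
    (hBound_image_univ_le_zero hμ).trans_lt (by positivity)

lemma span_eInP_univ_le_span_tanisakiEGens :
    Ideal.span (Set.range fun p => eInP c (univ.image c) (p + 1)) ≤
      Ideal.span (tanisakiEGens μ c) :=
  Ideal.span_le.2 <| Set.range_subset_iff.2 fun p => eInP_mem_span_tanisakiEGens <|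
    (eBound_image_univ hμ).trans_lt (by positivity)

lemma hInP_mem_span_tanisakiEGens {S : Finset ℤ} {r : ℕ} (h : hBound μ c S < r) :
    hInP c S r ∈ Ideal.span (tanisakiEGens μ c) := by
  have hcong := span_eInP_univ_le_span_tanisakiEGens hμ <| span_hInP_univ_le_span_eInP_univ c <|
    hInP_sub_eInP_mem_span c (blockVars_image_univ_sdiff c S) r
  have hcompl := eInP_mem_span_tanisakiEGens ((eBound_image_univ_sdiff_le hμ S).trans_lt h)
  exact (Submodule.sub_mem_iff_left _ (Ideal.mul_mem_left _ _ hcompl)).1 hcong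

lemma eInP_mem_span_tanisakiHGens {S : Finset ℤ} {r : ℕ} (h : eBound μ c S < r) :
    eInP c S r ∈ Ideal.span (tanisakiHGens μ c) := by
  have hcong := span_hInP_univ_le_span_tanisakiHGens hμ <|
    hInP_sub_eInP_mem_span c (S := univ.image c \ S) (T := S)
      (by rw [blockVars_image_univ_sdiff, compl_compl]) r
  have hcompl := hInP_mem_span_tanisakiHGens ((hBound_image_univ_sdiff hμ S).trans_lt h)
  rw [Submodule.sub_mem_iff_right _ hcompl] at hcong
  exact (Ideal.unit_mul_mem_iff_mem _ ((isUnit_neg_one (α := YoungInvariants c)).pow r)).1 hcong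

end Tanisaki

/-- Tanisaki-type ideal `I^μ_ν`: the two generating sets, by complete symmetric
functions `h_r(ν; i_1,…,i_m)` with `r > λ_1+⋯+λ_m − ν_{i_1}−⋯−ν_{i_m}`, and by
elementary symmetric functions `e_r(ν; i_1,…,i_m)` with
`r > ν_{i_1}+⋯+ν_{i_m} − λ_{l+1}−λ_{l+2}−⋯` where
`l = #{i | ν_i > 0, i ∉ {i_1,…,i_m}}`, span the same ideal of `P_ν`. -/
theorem tanisaki_ideal_h_generators_eq_e_generators (n : ℕ) (μ : ℤ →₀ ℕ)
    (hμ : μ.sum (fun _ m => m) = n) (c : Fin n → ℤ) :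
    Ideal.span {f : ↥(invariantSubalgebra n (youngSubgroup n c)) |
        ∃ (S : Finset ℤ) (r : ℕ), S.Nonempty ∧
          ((∑ j ∈ Finset.range S.card, (lamPart μ j : ℤ)) -
              ∑ i ∈ S, (nuPart n c i : ℤ)) < (r : ℤ) ∧
          (↑f : MvPolynomial (Fin n) ℂ) = hIn n c S r} =
      Ideal.span {f : ↥(invariantSubalgebra n (youngSubgroup n c)) |
        ∃ (S : Finset ℤ) (r : ℕ), S.Nonempty ∧
          ((∑ i ∈ S, (nuPart n c i : ℤ)) -
              ∑ j ∈ Finset.Ico ((Finset.image c Finset.univ \ S).card) n,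
                (lamPart μ j : ℤ)) < (r : ℤ) ∧
          (↑f : MvPolynomial (Fin n) ℂ) = eIn n c S r} := by
  apply le_antisymm <;> refine Ideal.span_le.2 ?_ <;> rintro f ⟨S, r, -, hr, hf⟩
  · obtain rfl : f = hInP c S r := Subtype.ext hf
    exact hInP_mem_span_tanisakiEGens hμ hr
  · obtain rfl : f = eInP c S r := Subtype.ext hf
    exact eInP_mem_span_tanisakiHGens hμ hr
end

section
/- With notation as in the Tanisaki-type presentation, the graded algebra C^μ_ν = P_ν / I^μ_ν is nonzero if and only if λ ≥ ν⁺ in the dominance order, where λ is the transpose partition of μ and ν⁺ is the partition obtained by sorting ν. -/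
open Finset MvPolynomial

/-! The generator `h_0(ν; S) = 1` lies in `I^μ_ν` exactly when dominance fails for the blocks `S`;
when dominance holds every generator has positive degree, so evaluation at the origin is a
character of `P_ν` vanishing on `I^μ_ν`. -/

theorem hIn_zero (n : ℕ) (c : Fin n → ℤ) (S : Finset ℤ) : hIn n c S 0 = 1 := by
  simp only [hIn, Finset.sym_zero, Finset.sum_singleton]
  rfl

theorem constantCoeff_hIn (n : ℕ) (c : Fin n → ℤ) (S : Finset ℤ) {r : ℕ} (hr : r ≠ 0) :
    constantCoeff (hIn n c S r) = 0 := by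
  rw [hIn, map_sum]
  refine Finset.sum_eq_zero fun m _ => ?_
  rw [map_multiset_prod, Multiset.map_map]
  have hX : constantCoeff ∘ (X : Fin n → MvPolynomial (Fin n) ℂ) = fun _ => 0 := by
    funext j; exact constantCoeff_X (R := ℂ) j
  rw [hX, Multiset.map_const', Multiset.prod_replicate, Sym.card_coe, zero_pow hr]

theorem Subalgebra.nontrivial_quotient_span_of_constantCoeff_eq_zero {σ R : Type*} [CommRing R]
    [Nontrivial R] (A : Subalgebra R (MvPolynomial σ R)) (s : Set A)
    (hs : ∀ f ∈ s, constantCoeff (f : MvPolynomial σ R) = 0) :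
    Nontrivial (A ⧸ Ideal.span s) :=
  Ideal.Quotient.nontrivial_iff.mpr <| ne_top_of_le_ne_top
    (RingHom.ker_ne_top ((constantCoeff : MvPolynomial σ R →+* R).comp A.val.toRingHom))
    (Ideal.span_le.mpr hs)

theorem tanisaki_quotient_nontrivial_iff_dominance_general (n : ℕ) (μ : ℤ →₀ ℕ)
    (c : Fin n → ℤ) :
    Nontrivial (↥(invariantSubalgebra n (youngSubgroup n c)) ⧸
        Ideal.span {f : ↥(invariantSubalgebra n (youngSubgroup n c)) |
          ∃ (S : Finset ℤ) (r : ℕ), S.Nonempty ∧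
            ((∑ j ∈ Finset.range S.card, (lamPart μ j : ℤ)) -
                ∑ i ∈ S, (nuPart n c i : ℤ)) < (r : ℤ) ∧
            (↑f : MvPolynomial (Fin n) ℂ) = hIn n c S r}) ↔
      ∀ S : Finset ℤ, ∑ i ∈ S, nuPart n c i ≤ ∑ j ∈ Finset.range S.card, lamPart μ j := by
  constructor
  · intro hnt S
    by_contra hS
    have hSne : S.Nonempty := Finset.nonempty_iff_ne_empty.mpr (by rintro rfl; simp at hS)
    refine (Ideal.Quotient.nontrivial_iff.mp hnt) (Ideal.eq_top_of_isUnit_mem _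
      (Ideal.subset_span ⟨S, 0, hSne, ?_, (hIn_zero n c S).symm⟩) isUnit_one)
    rw [Nat.cast_zero, sub_neg]
    exact_mod_cast not_le.mp hS
  · intro h
    refine Subalgebra.nontrivial_quotient_span_of_constantCoeff_eq_zero _ _ ?_
    rintro f ⟨S, r, -, hr, hf⟩
    have hS := h S
    zify at hS
    rw [hf, constantCoeff_hIn n c S (by omega)]

set_option synthInstance.maxHeartbeats 1000000 in
set_option maxHeartbeats 2000000 in
/-- The algebra `C^μ_ν = P_ν / I^μ_ν` is nonzero if and only if `λ ≥ ν⁺` in the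
dominance order, i.e. iff `λ_1+⋯+λ_m ≥ ν_{i_1}+⋯+ν_{i_m}` for all distinct `i_1,…,i_m`. -/
theorem tanisaki_quotient_nontrivial_iff_dominance (n : ℕ) (μ : ℤ →₀ ℕ)
    (hμ : μ.sum (fun _ m => m) = n) (c : Fin n → ℤ) :
    Nontrivial (↥(invariantSubalgebra n (youngSubgroup n c)) ⧸
        Ideal.span {f : ↥(invariantSubalgebra n (youngSubgroup n c)) |
          ∃ (S : Finset ℤ) (r : ℕ), S.Nonempty ∧
            ((∑ j ∈ Finset.range S.card, (lamPart μ j : ℤ)) -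
                ∑ i ∈ S, (nuPart n c i : ℤ)) < (r : ℤ) ∧
            (↑f : MvPolynomial (Fin n) ℂ) = hIn n c S r}) ↔
      ∀ S : Finset ℤ, ∑ i ∈ S, nuPart n c i ≤ ∑ j ∈ Finset.range S.card, lamPart μ j :=
  tanisaki_quotient_nontrivial_iff_dominance_general n μ c
end

section
/- Let C_ν ⊆ C_{ν,ν'} be commutative rings where C_{ν,ν'} is free as a C_ν-module with basis 1, x, x², …, x^a for some element x ∈ C_{ν,ν'} satisfying e_s-relations of the partial coinvariant algebra; concretely, suppose x^{a+r} = ∑_{s=0}^{a}∑_{t=0}^{s}(−1)^{s−t} e_{s−t} h_{r+t} x^{a−s} for all r ≥ 1, where e_j, h_j ∈ C_ν with the standard relations ∑_{s=0}^{r}(−1)^s e_s h_{r−s} = 0 for r ≥ 1, e_0 = h_0 = 1, e_j = 0 for j > a+1. Then the C_ν-linear map δ_0 : C_{ν,ν'} → C_ν determined by δ_0(x^s) = 0 for 0 ≤ s < a and δ_0(x^a) = (−1)^a satisfies δ_0(x^r) = (−1)^a h_{r−a} for all r ≥ 0, and the maps δ_0, xδ_0, …, x^aδ_0 form a C_ν-basis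 of Hom_{C_ν}(C_{ν,ν'}, C_ν). -/
/-!
Only the `s = 0` term of the expansion of `x^(a+k)` survives `δ₀`, since `δ₀` kills
`x^(a-s)` for `s ≥ 1`; this gives `δ₀(x^(a+k)) = (-1)^a h_k`. Consequently the Gram matrix
`δ₀(x^(i+j))` of the family `x^i δ₀` against the basis `x^j` is a Hankel matrix that vanishes
above the antidiagonal and has the unit `(-1)^a` on it, so its determinant is a unit and the
family is a basis of the dual.
-/

open Finset

theorem Matrix.isUnit_det_hankel_of_eq_zero_of_lt {R : Type*} [CommRing R] {a : ℕ}
    (c : ℕ → R) (hlt : ∀ k < a, c k = 0) (ha : IsUnit (c a)) :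
    IsUnit (Matrix.of fun i j : Fin (a + 1) => c (i + j)).det := by
  set M : Matrix (Fin (a + 1)) (Fin (a + 1)) R := Matrix.of fun i j => c (i + j)
  have hN : ∀ i j, M.submatrix id Fin.revPerm i j = c (i + (a - j)) := by
    intro i j
    simp [M, Fin.val_rev]
  have htri : (M.submatrix id Fin.revPerm).IsLowerTriangular := by
    intro i j hij
    rw [hN]
    exact hlt _ (by have : (i : ℕ) < j := hij; omega)
  have hdiag : ∀ i, M.submatrix id Fin.revPerm i i = c a := by
    intro i
    rw [hN, show (i : ℕ) + (a - i) = a by omega]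
  have hdetN : IsUnit (M.submatrix id Fin.revPerm).det := by
    rw [Matrix.det_of_isLowerTriangular _ htri, Finset.prod_congr rfl fun i _ => hdiag i,
      Finset.prod_const]
    exact ha.pow _
  rw [Matrix.det_permute'] at hdetN
  exact (IsUnit.mul_iff.mp hdetN).2

theorem apply_pow_add_eq_of_expansion {A B : Type*} [CommRing A] [Semiring B] [Module A B]
    (x : B) (a : ℕ) (e h : ℕ → A) (he0 : e 0 = 1) (hh0 : h 0 = 1)
    (hx : ∀ r : ℕ, 1 ≤ r →
      x ^ (a + r) = ∑ s ∈ range (a + 1), ∑ t ∈ range (s + 1),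
        ((-1 : A) ^ (s - t) * (e (s - t) * h (r + t))) • x ^ (a - s))
    (δ : B →ₗ[A] A) (hδlt : ∀ s < a, δ (x ^ s) = 0) (k : ℕ) :
    δ (x ^ (a + k)) = h k * δ (x ^ a) := by
  rcases Nat.eq_zero_or_pos k with rfl | hk
  · rw [add_zero, hh0, one_mul]
  have hvanish : ∀ s ∈ range (a + 1), s ≠ 0 →
      δ (∑ t ∈ range (s + 1), ((-1 : A) ^ (s - t) * (e (s - t) * h (k + t))) • x ^ (a - s))
        = 0 := by
    intro s hs hs0
    have : s ≤ a := Nat.lt_succ_iff.mp (mem_range.mp hs)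
    simp only [map_sum, map_smul, hδlt (a - s) (by omega), smul_zero, sum_const_zero]
  rw [hx k hk, map_sum, sum_eq_single_of_mem 0 (mem_range.mpr a.succ_pos) hvanish]
  simp [he0]

theorem exists_basis_dual_mulLeft_pow {A B : Type*} [CommRing A] [Semiring B] [Algebra A B]
    (x : B) (a : ℕ) (bas : Module.Basis (Fin (a + 1)) A B)
    (hbas : ∀ i : Fin (a + 1), bas i = x ^ (i : ℕ))
    (δ : B →ₗ[A] A) (hδlt : ∀ s < a, δ (x ^ s) = 0) (hδa : IsUnit (δ (x ^ a))) :
    ∃ bb : Module.Basis (Fin (a + 1)) A (B →ₗ[A] A),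
      ∀ (i : Fin (a + 1)) (y : B), bb i y = δ (x ^ (i : ℕ) * y) := by
  set v : Fin (a + 1) → Module.Dual A B := fun i => δ ∘ₗ LinearMap.mulLeft A (x ^ (i : ℕ))
  have hgram :
      bas.dualBasis.toMatrix v = Matrix.of fun i j : Fin (a + 1) => δ (x ^ ((i : ℕ) + j)) := by
    ext i j
    simp [v, Module.Basis.toMatrix_apply, hbas, ← pow_add, add_comm]
  have hunit : IsUnit (bas.dualBasis.det v) := by
    rw [Module.Basis.det_apply, hgram]
    exact Matrix.isUnit_det_hankel_of_eq_zero_of_lt (fun k => δ (x ^ k)) hδlt hδa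
  obtain ⟨hli, hspan⟩ := (bas.dualBasis.is_basis_iff_det).mpr hunit
  exact ⟨Module.Basis.mk hli hspan.ge, fun i y => by simp [v]⟩

theorem delta_basis_of_hom_general (A B : Type*) [CommRing A] [CommRing B] [Algebra A B]
    (x : B) (a : ℕ)
    (bas : Module.Basis (Fin (a + 1)) A B) (hbas : ∀ i : Fin (a + 1), bas i = x ^ (i : ℕ))
    (e h : ℕ → A) (he0 : e 0 = 1) (hh0 : h 0 = 1)
    (hx : ∀ r : ℕ, 1 ≤ r →
      x ^ (a + r) = ∑ s ∈ Finset.range (a + 1), ∑ t ∈ Finset.range (s + 1),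
        ((-1 : A) ^ (s - t) * (e (s - t) * h (r + t))) • x ^ (a - s))
    (δ0 : B →ₗ[A] A)
    (hδlt : ∀ s : ℕ, s < a → δ0 (x ^ s) = 0)
    (hδa : δ0 (x ^ a) = (-1 : A) ^ a) :
    (∀ r : ℕ, δ0 (x ^ r) = if a ≤ r then (-1 : A) ^ a * h (r - a) else 0) ∧
    (∃ bb : Module.Basis (Fin (a + 1)) A (B →ₗ[A] A),
      ∀ (i : Fin (a + 1)) (y : B), bb i y = δ0 (x ^ (i : ℕ) * y)) := by
  refine ⟨fun r => ?_, exists_basis_dual_mulLeft_pow x a bas hbas δ0 hδlt ?_⟩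
  · split_ifs with har
    · obtain ⟨k, rfl⟩ := Nat.exists_eq_add_of_le har
      rw [Nat.add_sub_cancel_left, apply_pow_add_eq_of_expansion x a e h he0 hh0 hx δ0 hδlt k,
        hδa, mul_comm]
    · exact hδlt r (Nat.lt_of_not_le har)
  · rw [hδa]
    exact isUnit_one.neg.pow a

/-- Key duality computation for partial coinvariant algebras: if `B` is free over `A`
with basis `1, x, …, x^a` and `x` satisfies the expansion relations coming from
symmetric functions `e_j, h_j ∈ A`, then the `A`-linear map `δ₀ : B → A` with
`δ₀(x^s) = 0` for `s < a` and `δ₀(x^a) = (−1)^a` satisfies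
`δ₀(x^r) = (−1)^a h_{r−a}` for all `r ≥ 0`, and `δ₀, xδ₀, …, x^aδ₀` form an `A`-basis
of `Hom_A(B, A)`. -/
theorem delta_basis_of_hom (A B : Type*) [CommRing A] [CommRing B] [Algebra A B]
    (x : B) (a : ℕ)
    (bas : Module.Basis (Fin (a + 1)) A B) (hbas : ∀ i : Fin (a + 1), bas i = x ^ (i : ℕ))
    (e h : ℕ → A) (he0 : e 0 = 1) (hh0 : h 0 = 1)
    (hrel : ∀ r : ℕ, 1 ≤ r →
      ∑ s ∈ Finset.range (r + 1), (-1 : A) ^ s * e s * h (r - s) = 0)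
    (hetop : ∀ j : ℕ, a + 1 < j → e j = 0)
    (hx : ∀ r : ℕ, 1 ≤ r →
      x ^ (a + r) = ∑ s ∈ Finset.range (a + 1), ∑ t ∈ Finset.range (s + 1),
        ((-1 : A) ^ (s - t) * (e (s - t) * h (r + t))) • x ^ (a - s))
    (δ0 : B →ₗ[A] A)
    (hδlt : ∀ s : ℕ, s < a → δ0 (x ^ s) = 0)
    (hδa : δ0 (x ^ a) = (-1 : A) ^ a) :
    (∀ r : ℕ, δ0 (x ^ r) = if a ≤ r then (-1 : A) ^ a * h (r - a) else 0) ∧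
    (∃ bb : Module.Basis (Fin (a + 1)) A (B →ₗ[A] A),
      ∀ (i : Fin (a + 1)) (y : B), bb i y = δ0 (x ^ (i : ℕ) * y)) :=
  delta_basis_of_hom_general A B x a bas hbas e h he0 hh0 hx δ0 hδlt hδa
end
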